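/- Let G be a finite connected locally connected graph, let z be a vertex, and let a ≠ z be a vertex such that the class [a]_z = {w ≠ z : line(z,w) = line(z,a)} has at least two elements and is not contained in the neighborhood N(z). Then for all distinct u, v ∈ [a]_z: (i) line(u,v) = {w : d(u,w) + d(w,v) = d(u,v)}; (ii) z ∈ line(u,v); and (iii) line(u,v) ≠ line(z,w) for every vertex w ≠ z. -/

import Mathlib

open SimpleGraph

/-- The line defined by two vertices `a` and `b` of a graph: `{a, b}` together with all
vertices `c` lying on a shortest path through `a`, `b` and `c` (in some order). -/
def SimpleGraph.line {V : Type*} (G : SimpleGraph V) (a b : V) : Set V :=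
  {a, b} ∪ {c | G.dist a b = G.dist a c + G.dist c b ∨
                G.dist a c = G.dist a b + G.dist b c ∨
                G.dist b c = G.dist b a + G.dist a c}

/-- The set of all lines of a graph. -/
def SimpleGraph.lineSet {V : Type*} (G : SimpleGraph V) : Set (Set V) :=
  {s | ∃ a b : V, a ≠ b ∧ s = G.line a b}

/-- A graph is locally connected if the subgraph induced on each neighborhood is connected. -/
def SimpleGraph.LocallyConnected {V : Type*} (G : SimpleGraph V) : Prop :=
  ∀ v : V, (G.induce (G.neighborSet v)).Connected

/-- The class `[u]_z`: all vertices `w ≠ z` defining the same line with `z` as `u` does. -/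
def SimpleGraph.lineClass {V : Type*} (G : SimpleGraph V) (z u : V) : Set V :=
  {w | w ≠ z ∧ G.line z w = G.line z u}

/-!
Everything rests on a discrete intermediate value theorem: in a locally connected graph the
distances from a fixed vertex to the neighbours of `x` fill an integer interval. If
`line z u = line z v`, then every `y ∉ {z, u, v}` is collinear with `z, u` exactly when it is
collinear with `z, v`; a neighbour `y` of a suitable vertex at a prescribed distance breaks this
symmetry unless `z` lies on a geodesic from `u` to `v` and nothing lies beyond `u` or `v` on
such geodesics, which gives (i) and (ii). For (iii), if `line z w` were the interval `I(u, v)`,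
then `u` and `v` would both lie between `z` and `w`, so `z, u, w, v` would form a geodesic
rectangle; the same device forces its sides to have length `1`, and a class member `b` with
`d(z, b) ≥ 2` then produces the final contradiction.
-/

namespace SimpleGraph

variable {V : Type*} {G : SimpleGraph V}

theorem mem_line_iff {a b c : V} :
    c ∈ G.line a b ↔ c = a ∨ c = b ∨ G.dist a b = G.dist a c + G.dist c b ∨
      G.dist a c = G.dist a b + G.dist b c ∨ G.dist b c = G.dist b a + G.dist a c := by
  simp only [line, Set.mem_union, Set.mem_insert_iff, Set.mem_singleton_iff, Set.mem_ofPred_eq,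
    or_assoc]

theorem mem_line_iff_of_ne {a b c : V} (hca : c ≠ a) (hcb : c ≠ b) :
    c ∈ G.line a b ↔ G.dist a b = G.dist a c + G.dist c b ∨
      G.dist a c = G.dist a b + G.dist b c ∨ G.dist b c = G.dist b a + G.dist a c := by
  simp [mem_line_iff, hca, hcb]

def interval (G : SimpleGraph V) (u v : V) : Set V :=
  {w | G.dist u w + G.dist w v = G.dist u v}

theorem mem_interval {u v w : V} :
    w ∈ G.interval u v ↔ G.dist u w + G.dist w v = G.dist u v := Iff.rfl

theorem interval_comm (u v : V) : G.interval u v = G.interval v u := by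
  ext w
  simp only [mem_interval]
  grind [dist_comm]

theorem left_mem_interval (u v : V) : u ∈ G.interval u v := by
  simp [mem_interval]

theorem right_mem_line {a b : V} : b ∈ G.line a b :=
  mem_line_iff.2 (.inr (.inl rfl))

theorem Walk.exists_mem_support_apply_eq {W : Type*} {H : SimpleGraph W} (f : W → ℕ)
    (hf : ∀ ⦃a b⦄, H.Adj a b → f b ≤ f a + 1) {x y : W} (p : H.Walk x y) {m : ℕ}
    (hx : f x ≤ m) (hy : m ≤ f y) : ∃ c ∈ p.support, f c = m := by
  induction p with
  | nil => exact ⟨_, by simp, le_antisymm hx hy⟩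
  | @cons a b _ h q ih =>
    by_cases hm : f a = m
    · exact ⟨a, by simp, hm⟩
    · obtain ⟨c, hc, hfc⟩ := ih (le_trans (hf h) (by omega)) hy
      exact ⟨c, by simp [hc], hfc⟩

theorem LocallyConnected.exists_adj_dist_eq (hlc : G.LocallyConnected) {x y₀ y₁ c : V}
    (h₀ : G.Adj x y₀) (h₁ : G.Adj x y₁) {m : ℕ} (hm₀ : G.dist c y₀ ≤ m) (hm₁ : m ≤ G.dist c y₁) :
    ∃ y, G.Adj x y ∧ G.dist c y = m := by
  obtain ⟨p⟩ := (hlc x).preconnected ⟨y₀, h₀⟩ ⟨y₁, h₁⟩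
  have hlip : ∀ ⦃a b : G.neighborSet x⦄, (G.induce (G.neighborSet x)).Adj a b →
      G.dist c b ≤ G.dist c a + 1 := fun a b hab ↦ by
    have hadj : G.Adj a b := by simpa using hab
    simpa [dist_eq_one_iff_adj.2 hadj] using hadj.reachable.dist_triangle_right c
  obtain ⟨y, -, hy⟩ := p.exists_mem_support_apply_eq (fun a ↦ G.dist c a.1) hlip hm₀ hm₁
  exact ⟨y, y.2, hy⟩

theorem exists_adj_dist_add_one_eq {z w : V} (h : G.dist z w ≠ 0) :
    ∃ y, G.Adj w y ∧ G.dist z y + 1 = G.dist z w := by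
  obtain ⟨p, hp⟩ := exists_walk_of_dist_ne_zero (G := G) (u := w) (v := z) (dist_comm ▸ h)
  cases p with
  | nil => grind [dist_comm]
  | cons hadj q =>
    refine ⟨_, hadj, ?_⟩
    have := dist_le q
    have := hadj.symm.reachable.dist_triangle_right z
    have := dist_eq_one_iff_adj.2 hadj
    grind [dist_comm, Walk.length_cons]

/-- Here `z, u, w, v` is a geodesic rectangle with sides `d(z, u)` and `d(z, v)`. -/
theorem dist_lt_two_of_line_eq_of_rectangle {z u v w : V} (hG : G.Connected) (huz : u ≠ z)
    (hline : G.line z u = G.line z v) (huv : G.dist u v = G.dist z u + G.dist z v)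
    (hzw : G.dist z w = G.dist z u + G.dist z v) (huw : G.dist u w = G.dist z v)
    (hvw : G.dist v w = G.dist z u) : G.dist z v < 2 := by
  by_contra! hzv
  have := hG.pos_dist_of_ne huz.symm
  obtain ⟨y, hy, huy⟩ := exists_adj_dist_add_one_eq (z := u) (by omega : G.dist u w ≠ 0)
  have := dist_eq_one_iff_adj.2 hy
  have : G.dist u v ≤ G.dist u y + G.dist y v := hG.dist_triangle
  have : G.dist v y ≤ G.dist v w + G.dist w y := hG.dist_triangle
  have : G.dist z y ≤ G.dist z u + G.dist u y := hG.dist_triangle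
  have : G.dist z w ≤ G.dist z y + G.dist y w := hG.dist_triangle
  have hyz : y ≠ z := by grind [dist_comm]
  have hyu : y ≠ u := by grind [dist_comm]
  have hyv : y ≠ v := by grind [dist_comm]
  have hmem := Set.ext_iff.1 hline y
  rw [mem_line_iff_of_ne hyz hyu, mem_line_iff_of_ne hyz hyv] at hmem
  grind [dist_comm]

section LocallyConnected

variable (hG : G.Connected) (hlc : G.LocallyConnected)
include hG hlc

theorem dist_ne_add_of_line_eq {z u w : V} (huz : u ≠ z) (huw : u ≠ w)
    (hline : G.line z u = G.line z w) : G.dist z w ≠ G.dist z u + G.dist u w := by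
  intro hzw
  have hzu := hG.pos_dist_of_ne huz.symm
  have huw' := hG.pos_dist_of_ne huw
  obtain ⟨y₀, hy₀, hzy₀⟩ := exists_adj_dist_add_one_eq hzu.ne'
  obtain ⟨y₁, hy₁, hwy₁⟩ := exists_adj_dist_add_one_eq (dist_comm ▸ huw'.ne' : G.dist w u ≠ 0)
  have : G.dist z w ≤ G.dist z y₀ + G.dist y₀ w := hG.dist_triangle
  have := dist_eq_one_iff_adj.2 hy₀
  obtain ⟨p, hp, hwp⟩ := hlc.exists_adj_dist_eq hy₁ hy₀ (c := w) (m := G.dist u w)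
    (by grind [dist_comm]) (by grind [dist_comm])
  have := dist_eq_one_iff_adj.2 hp
  have : G.dist z p ≤ G.dist z u + G.dist u p := hG.dist_triangle
  have : G.dist z u ≤ G.dist z p + G.dist p u := hG.dist_triangle
  have hpz : p ≠ z := by grind [dist_comm]
  have hpw : p ≠ w := by grind [dist_comm]
  -- `p` lies on `line z w` iff `d(z, p) = d(z, u)`, and on `line z u` iff not.
  have hmem := Set.ext_iff.1 hline p
  rw [mem_line_iff_of_ne hpz hp.ne', mem_line_iff_of_ne hpz hpw] at hmem
  grind [dist_comm]

theorem dist_eq_add_of_line_eq {z u w : V} (huz : u ≠ z) (hwz : w ≠ z) (huw : u ≠ w)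
    (hline : G.line z u = G.line z w) : G.dist u w = G.dist u z + G.dist z w := by
  have hu : u ∈ G.line z w := hline ▸ right_mem_line
  have h₁ := dist_ne_add_of_line_eq hG hlc huz huw hline
  have h₂ := dist_ne_add_of_line_eq hG hlc hwz huw.symm hline.symm
  rw [mem_line_iff_of_ne huz huw] at hu
  grind [dist_comm]

theorem eq_of_dist_eq_add_of_line_eq {z u v c : V} (huz : u ≠ z) (hvz : v ≠ z) (huv : u ≠ v)
    (hline : G.line z u = G.line z v) (hc : G.dist u c = G.dist u v + G.dist v c) : c = v := by
  by_contra hcv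
  have huzv := dist_eq_add_of_line_eq hG hlc huz hvz huv hline
  have hzu := hG.pos_dist_of_ne huz.symm
  have hzv := hG.pos_dist_of_ne hvz.symm
  obtain ⟨c', hc', hcc'⟩ := exists_adj_dist_add_one_eq (hG.pos_dist_of_ne hcv).ne'
  have : G.dist u c ≤ G.dist u c' + G.dist c' c := hG.dist_triangle
  have : G.dist u c' ≤ G.dist u v + G.dist v c' := hG.dist_triangle
  have := dist_eq_one_iff_adj.2 hc'
  obtain ⟨y₀, hy₀, hzy₀⟩ := exists_adj_dist_add_one_eq hzv.ne'
  have : G.dist u y₀ ≤ G.dist u z + G.dist z y₀ := hG.dist_triangle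
  obtain ⟨x, hx, hux⟩ := hlc.exists_adj_dist_eq hy₀ hc' (c := u) (m := G.dist u v)
    (by grind [dist_comm]) (by grind [dist_comm])
  have := dist_eq_one_iff_adj.2 hx
  have : G.dist z x ≤ G.dist z v + G.dist v x := hG.dist_triangle
  have : G.dist z v ≤ G.dist z x + G.dist x v := hG.dist_triangle
  have hxz : x ≠ z := by grind [dist_comm]
  have hxu : x ≠ u := by grind [dist_comm]
  have := hG.pos_dist_of_ne hxz.symm
  -- `x` lies on `line z u` iff `d(z, x) = d(z, v)`, and on `line z v` iff not.
  have hmem := Set.ext_iff.1 hline x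
  rw [mem_line_iff_of_ne hxz hxu, mem_line_iff_of_ne hxz hx.ne'] at hmem
  grind [dist_comm]

theorem line_eq_interval_of_line_eq {z u v : V} (huz : u ≠ z) (hvz : v ≠ z) (huv : u ≠ v)
    (hline : G.line z u = G.line z v) : G.line u v = G.interval u v := by
  ext c
  have hv := eq_of_dist_eq_add_of_line_eq hG hlc huz hvz huv hline (c := c)
  have hu := eq_of_dist_eq_add_of_line_eq hG hlc hvz huz huv.symm hline.symm (c := c)
  rw [mem_line_iff, mem_interval]
  grind [dist_comm]

theorem line_ne_interval_self {z u v : V} (huz : u ≠ z) (hvz : v ≠ z) (huv : u ≠ v)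
    (hline : G.line z u = G.line z v) : G.line z u ≠ G.interval u v := by
  intro hI
  have huzv := dist_eq_add_of_line_eq hG hlc huz hvz huv hline
  have hzu := hG.pos_dist_of_ne huz.symm
  have hzv := hG.pos_dist_of_ne hvz.symm
  obtain ⟨y₀, hy₀, huy₀⟩ := exists_adj_dist_add_one_eq (dist_comm ▸ hzu.ne' : G.dist u z ≠ 0)
  obtain ⟨y₁, hy₁, hvy₁⟩ := exists_adj_dist_add_one_eq (dist_comm ▸ hzv.ne' : G.dist v z ≠ 0)
  have : G.dist u v ≤ G.dist u y₁ + G.dist y₁ v := hG.dist_triangle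
  obtain ⟨y, hy, huy⟩ := hlc.exists_adj_dist_eq hy₀ hy₁ (c := u) (m := G.dist u z)
    (by omega) (by grind [dist_comm])
  have := dist_eq_one_iff_adj.2 hy
  have : G.dist v y ≤ G.dist v z + G.dist z y := hG.dist_triangle
  have : G.dist v z ≤ G.dist v y + G.dist y z := hG.dist_triangle
  have hyu : y ≠ u := by grind [dist_comm]
  have hyv : y ≠ v := by grind [dist_comm]
  -- `y ∉ line z u`, so `y ∉ line z v`, which forces `d(v, y) = d(v, z)`, i.e. `y ∈ I(u, v)`.
  have hmem := Set.ext_iff.1 hline y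
  have hmemI := Set.ext_iff.1 hI y
  rw [mem_line_iff_of_ne hy.ne' hyu, mem_line_iff_of_ne hy.ne' hyv] at hmem
  rw [mem_line_iff_of_ne hy.ne' hyu, mem_interval] at hmemI
  grind [dist_comm]

theorem line_ne_interval_of_dist_eq_add {z u v w : V} (huz : u ≠ z) (hvz : v ≠ z)
    (huv : u ≠ v) (hwz : w ≠ z) (hline : G.line z u = G.line z v)
    (hzv : G.dist z v = G.dist z w + G.dist w v) : G.line z w ≠ G.interval u v := by
  intro hI
  obtain rfl | hwv := eq_or_ne w v
  · exact line_ne_interval_self hG hlc hvz huz huv.symm hline.symm (hI.trans (interval_comm u w))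
  have huzv := dist_eq_add_of_line_eq hG hlc huz hvz huv hline
  have hzw := hG.pos_dist_of_ne hwz.symm
  have hwv' := hG.pos_dist_of_ne hwv
  obtain ⟨y₀, hy₀, hzy₀⟩ := exists_adj_dist_add_one_eq hzw.ne'
  obtain ⟨y₁, hy₁, hvy₁⟩ := exists_adj_dist_add_one_eq (dist_comm ▸ hwv'.ne' : G.dist v w ≠ 0)
  have : G.dist z v ≤ G.dist z y₁ + G.dist y₁ v := hG.dist_triangle
  have : G.dist z y₁ ≤ G.dist z w + G.dist w y₁ := hG.dist_triangle
  have := dist_eq_one_iff_adj.2 hy₁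
  obtain ⟨y, hy, hzy⟩ := hlc.exists_adj_dist_eq hy₀ hy₁ (c := z) (m := G.dist z w)
    (by omega) (by grind [dist_comm])
  have := dist_eq_one_iff_adj.2 hy
  have hyz : y ≠ z := by grind [dist_comm]
  have hmemI := Set.ext_iff.1 hI y
  rw [mem_line_iff_of_ne hyz hy.ne', mem_interval] at hmemI
  have : G.dist u v ≤ G.dist u y + G.dist y v := hG.dist_triangle
  have : G.dist u y ≤ G.dist u z + G.dist z y := hG.dist_triangle
  have : G.dist v y ≤ G.dist v w + G.dist w y := hG.dist_triangle
  have hyu : y ≠ u := by grind [dist_comm]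
  have hyv : y ≠ v := by grind [dist_comm]
  have hmem := Set.ext_iff.1 hline y
  rw [mem_line_iff_of_ne hyz hyu, mem_line_iff_of_ne hyz hyv] at hmem
  grind [dist_comm]

theorem dist_eq_add_of_line_eq_interval {z u v w : V} (huz : u ≠ z) (hvz : v ≠ z)
    (huv : u ≠ v) (hwz : w ≠ z) (hline : G.line z u = G.line z v)
    (hI : G.line z w = G.interval u v) : G.dist z w = G.dist z u + G.dist u w := by
  have hu : u ∈ G.line z w := hI ▸ left_mem_interval u v
  have hw : w ∈ G.interval u v := hI ▸ right_mem_line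
  have huzv := dist_eq_add_of_line_eq hG hlc huz hvz huv hline
  have hzu : G.dist z u ≠ G.dist z w + G.dist w u := fun h ↦
    line_ne_interval_of_dist_eq_add hG hlc hvz huz huv.symm hwz hline.symm h
      (hI.trans (interval_comm u v))
  have hzv : G.dist z v ≠ G.dist z w + G.dist w v := fun h ↦
    line_ne_interval_of_dist_eq_add hG hlc huz hvz huv hwz hline h hI
  rw [mem_line_iff] at hu
  rw [mem_interval] at hw
  grind [dist_comm]

theorem dist_le_one_of_adj_of_line_eq {z u b w : V} (hzu : G.Adj z u)
    (hb : G.line z u = G.line z b) (hzb : 2 ≤ G.dist z b) (huw : G.Adj u w) :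
    G.dist z w ≤ 1 := by
  by_contra! hzw
  have := dist_eq_one_iff_adj.2 hzu
  have := dist_eq_one_iff_adj.2 huw
  have : G.dist z w ≤ G.dist z u + G.dist u w := hG.dist_triangle
  have hbz : b ≠ z := by grind [dist_comm]
  have hub : G.dist u b = G.dist u z + G.dist z b :=
    dist_eq_add_of_line_eq hG hlc hzu.ne' hbz (by grind [dist_comm]) hb
  have hwz : w ≠ z := by grind [dist_comm]
  have hwb : w ≠ b := by grind [dist_comm]
  have hw := Set.ext_iff.1 hb w
  rw [mem_line_iff_of_ne hwz huw.ne', mem_line_iff_of_ne hwz hwb] at hw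
  have : G.dist u b ≤ G.dist u w + G.dist w b := hG.dist_triangle
  have hbw : G.dist b w = G.dist b z + 2 := by grind [dist_comm]
  obtain ⟨y, hy, hby⟩ := hlc.exists_adj_dist_eq hzu.symm huw (c := b) (m := G.dist b z + 1)
    (by omega) (by omega)
  have := dist_eq_one_iff_adj.2 hy
  have : G.dist z y ≤ G.dist z u + G.dist u y := hG.dist_triangle
  have hyz : y ≠ z := by grind [dist_comm]
  have hyb : y ≠ b := by grind [dist_comm]
  have := hG.pos_dist_of_ne hyz.symm
  -- `y` lies on `line z u` iff `d(z, y) = 2`, and on `line z b` iff `d(z, y) = 1`.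
  have hmem := Set.ext_iff.1 hb y
  rw [mem_line_iff_of_ne hyz hy.ne', mem_line_iff_of_ne hyz hyb] at hmem
  grind [dist_comm]

theorem line_ne_interval_of_line_eq {z u v b w : V} (huz : u ≠ z) (hvz : v ≠ z) (huv : u ≠ v)
    (hline : G.line z u = G.line z v) (hb : G.line z u = G.line z b) (hzb : 2 ≤ G.dist z b)
    (hwz : w ≠ z) : G.line z w ≠ G.interval u v := by
  intro hI
  have hzuw := dist_eq_add_of_line_eq_interval hG hlc huz hvz huv hwz hline hI
  have hzvw := dist_eq_add_of_line_eq_interval hG hlc hvz huz huv.symm hwz hline.symm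
    (hI.trans (interval_comm u v))
  have huwv : w ∈ G.interval u v := hI ▸ right_mem_line
  have huzv := dist_eq_add_of_line_eq hG hlc huz hvz huv hline
  rw [mem_interval] at huwv
  have hduv : G.dist u v = G.dist z u + G.dist z v := by grind [dist_comm]
  have hdzw : G.dist z w = G.dist z u + G.dist z v := by grind [dist_comm]
  have hduw : G.dist u w = G.dist z v := by grind [dist_comm]
  have hdvw : G.dist v w = G.dist z u := by grind [dist_comm]
  have hzv := dist_lt_two_of_line_eq_of_rectangle hG huz hline hduv hdzw hduw hdvw
  have hzu := dist_lt_two_of_line_eq_of_rectangle hG hvz hline.symm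
    (by grind [dist_comm]) (by omega) hdvw hduw
  have := hG.pos_dist_of_ne huz.symm
  have := hG.pos_dist_of_ne hvz.symm
  have := dist_le_one_of_adj_of_line_eq hG hlc (dist_eq_one_iff_adj.1 (by omega)) hb hzb
    (dist_eq_one_iff_adj.1 (by omega) : G.Adj u w)
  omega

end LocallyConnected

end SimpleGraph

theorem long_gen_general {V : Type*} (G : SimpleGraph V)
    (hG : G.Connected) (hlc : G.LocallyConnected)
    {z a : V}
    (hnotsub : ¬ G.lineClass z a ⊆ G.neighborSet z) :
    ∀ u ∈ G.lineClass z a, ∀ v ∈ G.lineClass z a, u ≠ v →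
      G.line u v = {w | G.dist u w + G.dist w v = G.dist u v} ∧
      z ∈ G.line u v ∧
      ∀ w : V, w ≠ z → G.line u v ≠ G.line z w := by
  rintro u ⟨huz, hua⟩ v ⟨hvz, hva⟩ huv
  have hline : G.line z u = G.line z v := hua.trans hva.symm
  obtain ⟨b, ⟨hbz, hba⟩, hbN⟩ := Set.not_subset.1 hnotsub
  have hzb : 2 ≤ G.dist z b := hG.one_lt_dist_of_ne_of_not_adj hbz.symm hbN
  have hI := line_eq_interval_of_line_eq hG hlc huz hvz huv hline
  refine ⟨hI, ?_, fun w hwz h ↦ ?_⟩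
  · rw [hI, mem_interval]
    exact (dist_eq_add_of_line_eq hG hlc huz hvz huv hline).symm
  · exact line_ne_interval_of_line_eq hG hlc huz hvz huv hline (hua.trans hba.symm) hzb hwz
      (h.symm.trans hI)

theorem long_gen {V : Type*} [Fintype V] (G : SimpleGraph V)
    (hG : G.Connected) (hlc : G.LocallyConnected)
    {z a : V} (haz : a ≠ z) (hcard : 2 ≤ (G.lineClass z a).ncard)
    (hnotsub : ¬ G.lineClass z a ⊆ G.neighborSet z) :
    ∀ u ∈ G.lineClass z a, ∀ v ∈ G.lineClass z a, u ≠ v →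
      G.line u v = {w | G.dist u w + G.dist w v = G.dist u v} ∧
      z ∈ G.line u v ∧
      ∀ w : V, w ≠ z → G.line u v ≠ G.line z w :=
  long_gen_general G hG hlc hnotsub
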